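/- arXiv:1808.03589 — 8 statements merged into one kernel-verified Lean document; each statement's English description precedes it below -/
import Mathlib

section
/- Let R be a commutative integral domain over a field k, σ a k-algebra automorphism of R with σ ≠ id, and δ a σ-derivation of R. Then there exists a unique element κ in the fraction field Frac(R) such that δ(h) = κ·(σ(h) − h) for all h ∈ R, where σ and δ are viewed inside Frac(R) via the canonical embedding. -/
/-! If `σ g ≠ g`, the twisted Leibniz rule applied to `g * h = h * g` gives
`δ h (σ g - g) = δ g (σ h - h)`, so `κ = δ g / (σ g - g)` works for every `h`; uniqueness is
read off at `h = g`. -/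

theorem mul_sub_eq_mul_sub_of_twisted_leibniz {R : Type*} [CommRing R] {σ δ : R → R}
    (hLeib : ∀ f g : R, δ (f * g) = δ f * g + σ f * δ g) (g h : R) :
    δ h * (σ g - g) = δ g * (σ h - h) := by
  have hgh := hLeib g h
  rw [mul_comm g h, hLeib h g] at hgh
  linear_combination -hgh

theorem existsUnique_forall_eq_mul_of_cross_mul_eq {ι K : Type*} [Field K] {a b : ι → K}
    (hcross : ∀ g h, a h * b g = a g * b h) {g : ι} (hg : b g ≠ 0) :
    ∃! κ : K, ∀ h, a h = κ * b h := by
  refine ⟨a g / b g, fun h => ?_, fun κ hκ => ?_⟩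
  · rw [div_mul_eq_mul_div, eq_div_iff hg, hcross]
  · rw [hκ g, mul_div_cancel_right₀ κ hg]

/-- If `σ ≠ id` is an automorphism of a domain `R` and `δ` a σ-derivation,
there is a unique `κ` in the fraction field with `δ(h) = κ(σ(h) − h)` for all `h ∈ R`. -/
theorem sigmaDerivation_exists_unique_kappa
    (k : Type*) [Field k] (R : Type*) [CommRing R] [IsDomain R] [Algebra k R]
    (σ : R ≃ₐ[k] R) (hσ : σ ≠ AlgEquiv.refl)
    (δ : R →ₗ[k] R)
    (hLeib : ∀ f g : R, δ (f * g) = δ f * g + σ f * δ g) :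
    ∃! κ : FractionRing R, ∀ h : R,
      algebraMap R (FractionRing R) (δ h) =
        κ * (algebraMap R (FractionRing R) (σ h) - algebraMap R (FractionRing R) h) := by
  set φ := algebraMap R (FractionRing R)
  obtain ⟨g, hg⟩ : ∃ g, σ g ≠ g := DFunLike.ne_iff.mp hσ
  have hφg : φ (σ g) - φ g ≠ 0 :=
    sub_ne_zero.mpr ((IsFractionRing.injective R (FractionRing R)).ne hg)
  refine existsUnique_forall_eq_mul_of_cross_mul_eq (fun g h => ?_) hφg
  simpa only [map_mul, map_sub] using
    congrArg φ (mul_sub_eq_mul_sub_of_twisted_leibniz hLeib g h)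
end

section
/- Let R be a commutative integral domain, σ an automorphism of R with σ ≠ id, and δ a σ-derivation. If there exists f ∈ R with σ(f) ≠ f and δ(f) = 0, then δ = 0. -/
/-- Comparing the twisted Leibniz rule on `f * g` and on `g * f`. -/
theorem sub_mul_eq_sub_mul_of_twisted_leibniz {R : Type*} [CommRing R] (σ δ : R → R)
    (hLeib : ∀ f g : R, δ (f * g) = δ f * g + σ f * δ g) (f g : R) :
    (σ f - f) * δ g = (σ g - g) * δ f := by
  have hfg := hLeib f g
  rw [mul_comm, hLeib g f] at hfg
  linear_combination -hfg

theorem sigmaDerivation_eq_zero_of_vanish_general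
    (k : Type*) [Field k] (R : Type*) [CommRing R] [IsDomain R] [Algebra k R]
    (σ : R ≃ₐ[k] R)
    (δ : R →ₗ[k] R)
    (hLeib : ∀ f g : R, δ (f * g) = δ f * g + σ f * δ g)
    (f : R) (hf : σ f ≠ f) (hδf : δ f = 0) :
    δ = 0 := by
  ext g
  have key := sub_mul_eq_sub_mul_of_twisted_leibniz σ δ hLeib f g
  rw [hδf, mul_zero] at key
  exact (mul_eq_zero.mp key).resolve_left (sub_ne_zero.mpr hf)

/-- If a σ-derivation δ on a domain vanishes on some `f` with `σ(f) ≠ f`,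
then `δ = 0`. -/
theorem sigmaDerivation_eq_zero_of_vanish
    (k : Type*) [Field k] (R : Type*) [CommRing R] [IsDomain R] [Algebra k R]
    (σ : R ≃ₐ[k] R) (hσ : σ ≠ AlgEquiv.refl)
    (δ : R →ₗ[k] R)
    (hLeib : ∀ f g : R, δ (f * g) = δ f * g + σ f * δ g)
    (f : R) (hf : σ f ≠ f) (hδf : δ f = 0) :
    δ = 0 :=
  sigmaDerivation_eq_zero_of_vanish_general k R σ δ hLeib f hf hδf
end

section
/- Let K be a commutative field, σ an automorphism of K, κ ∈ K, δ(c) = κ(σ(c) − c), and E = K[x; σ, δ] the Ore extension. Then for all natural numbers r, (x + κ)^r = Σ_{i=0}^{r} e_{r−i}(κ, σ(κ), ..., σ^{r−1}(κ)) · x^i in E, where e_j denotes the elementary symmetric polynomial of degree j in r variables (with e_0 = 1). -/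
/-!
The element `y = x + κ` satisfies `y c = σ(c) y` for all `c ∈ K`, since `δ` is the inner
σ-derivation `c ↦ κ σ(c) - c κ`. Writing elements `∑ cᵢ xⁱ` of `E` as `eval₂ ι x p` for a
commutative polynomial `p ∈ K[X]` (additive in `p`, but not multiplicative as `E` is not
commutative), left multiplication by `y` becomes `p ↦ (X + κ) · σ(p)`. Hence `yʳ` is represented
by `∏_{j<r} (X + σʲ(κ))`, whose coefficients are given by Vieta's formulas.
-/

open Polynomial

section SkewShift

variable {K E : Type*} [CommRing K] [Ring E] (ι : K →+* E) (σ : K →+* K) (x : E)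

theorem add_mul_eval₂_eq_eval₂_X_add_C_mul_map {κ : K}
    (hcomm : ∀ a : K, (x + ι κ) * ι a = ι (σ a) * (x + ι κ)) (p : K[X]) :
    (x + ι κ) * p.eval₂ ι x = ((X + C κ) * p.map σ).eval₂ ι x := by
  induction p using Polynomial.induction_on' with
  | add p q hp hq => simp only [eval₂_add, Polynomial.map_add, mul_add, hp, hq]
  | monomial n a =>
    rw [eval₂_monomial, ← mul_assoc, hcomm, Polynomial.map_monomial, add_mul, X_mul_monomial,
      C_mul_monomial, eval₂_add, eval₂_monomial, eval₂_monomial, mul_comm κ, map_mul]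
    simp only [mul_add, add_mul, pow_succ', mul_assoc]

theorem add_pow_eq_eval₂_prod {κ : K}
    (hcomm : ∀ a : K, (x + ι κ) * ι a = ι (σ a) * (x + ι κ)) (r : ℕ) :
    (x + ι κ) ^ r = (∏ j ∈ Finset.range r, (X + C ((⇑σ)^[j] κ))).eval₂ ι x := by
  induction r with
  | zero => simp
  | succ r ih =>
    rw [pow_succ', ih, add_mul_eval₂_eq_eval₂_X_add_C_mul_map ι σ x hcomm,
      Finset.prod_range_succ', Polynomial.map_prod, mul_comm]
    simp only [Polynomial.map_add, map_X, map_C, Function.iterate_succ_apply',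
      Function.iterate_zero_apply]

theorem eval₂_prod_X_add_C_eq_sum_esymm (f : ℕ → K) (r : ℕ) :
    (∏ j ∈ Finset.range r, (X + C (f j))).eval₂ ι x =
      ∑ i ∈ Finset.range (r + 1), ι (((Multiset.range r).map f).esymm (r - i)) * x ^ i := by
  have hdeg : (∏ j ∈ Finset.range r, (X + C (f j))).natDegree < r + 1 := by
    refine Nat.lt_succ_of_le ((natDegree_prod_le _ _).trans ?_)
    simpa using Finset.sum_le_sum fun j (_ : j ∈ Finset.range r) =>
      (natDegree_add_C (a := f j)).trans_le natDegree_X_le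
  rw [eval₂_eq_sum_range' ι hdeg]
  refine Finset.sum_congr rfl fun i hi => ?_
  rw [Finset.prod_eq_multiset_prod, Finset.range_val,
    Multiset.prod_X_add_C_coeff' _ _ (by simpa [Nat.lt_succ_iff] using hi), Multiset.card_range]

end SkewShift

/-- In `E = K[x; σ, δ]` with `δ(c) = κ(σ(c) − c)`, the power `(x + κ)^r`
equals `Σ_{i=0}^{r} e_{r−i}(κ, σ(κ), …, σ^{r−1}(κ)) x^i`, where `e_j` is the
elementary symmetric polynomial of degree `j`. -/
theorem ore_x_add_kappa_pow
    (K : Type*) [Field K] (σ : K ≃+* K) (κ : K)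
    (δ : K → K) (hδ : ∀ c : K, δ c = κ * (σ c - c))
    (E : Type*) [Ring E] (ι : K →+* E) (x : E)
    (hrel : ∀ c : K, x * ι c = ι (σ c) * x + ι (δ c)) :
    ∀ r : ℕ, (x + ι κ) ^ r =
      ∑ i ∈ Finset.range (r + 1),
        ι (((Multiset.range r).map (fun j => (⇑σ)^[j] κ)).esymm (r - i)) * x ^ i := by
  have hcomm : ∀ a : K, (x + ι κ) * ι a = ι (σ a) * (x + ι κ) := by
    intro a
    rw [add_mul, hrel, hδ, mul_add, ← map_mul, ← map_mul, add_assoc, ← map_add]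
    congr 2
    ring
  intro r
  exact (add_pow_eq_eval₂_prod ι (σ : K →+* K) x hcomm r).trans
    (eval₂_prod_X_add_C_eq_sum_esymm ι x _ r)
end

section
/- Let A = ⊕_{i∈ℕ} A_i be an ℕ-graded k-algebra and τ a graded k-algebra automorphism of A. Define a new multiplication on A by a ∗ b = a · τ^{deg a}(b) for homogeneous a, b, extended bilinearly. Then ∗ is associative, has unit 1, and preserves the grading, so (A, ∗) is again an ℕ-graded k-algebra (the Zhang twist tw(A, τ)). -/
/-! Since `τⁱ` is multiplicative, `τⁱ (b · τʲ c) = τⁱ b · τ^(i+j) c`, which is associativity of the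
twist; `τⁱ` fixes `1` and preserves each `Aⱼ`, giving the unit and the grading. -/

open Function Set

theorem iterate_twist_mul_assoc {M F : Type*} [Semigroup M] [FunLike F M M] [MulHomClass F M M]
    (f : F) (i j : ℕ) (a b c : M) :
    a * f^[i] b * f^[i + j] c = a * f^[i] (b * f^[j] c) := by
  rw [iterate_map_mul, ← iterate_add_apply, mul_assoc]

theorem SetLike.twist_mul_mem_graded {ι R σ : Type*} [Add ι] [Mul R] [SetLike σ R]
    {𝒜 : ι → σ} [SetLike.GradedMul 𝒜] {f : R → R} (hf : ∀ i, MapsTo f (𝒜 i) (𝒜 i))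
    {i j : ι} {a b : R} (ha : a ∈ 𝒜 i) (hb : b ∈ 𝒜 j) (n : ℕ) :
    a * f^[n] b ∈ 𝒜 (i + j) :=
  SetLike.mul_mem_graded ha ((hf j).iterate n hb)

/-- Zhang twist: for an ℕ-graded algebra `A` with grading `𝒜` and a graded
automorphism `τ`, the twisted multiplication `a ∗ b = a · τ^{deg a}(b)` on homogeneous
elements is associative, unital, and preserves the grading. -/
theorem zhang_twist_graded_algebra
    (k : Type*) [Field k] (A : Type*) [Ring A] [Algebra k A]
    (𝒜 : ℕ → Submodule k A) [GradedAlgebra 𝒜]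
    (τ : A ≃ₐ[k] A) (hτ : ∀ (i : ℕ) (a : A), a ∈ 𝒜 i → τ a ∈ 𝒜 i) :
    ∀ (i j l : ℕ) (a b c : A), a ∈ 𝒜 i → b ∈ 𝒜 j → c ∈ 𝒜 l →
      (a * (⇑τ)^[i] b ∈ 𝒜 (i + j)) ∧
      ((a * (⇑τ)^[i] b) * (⇑τ)^[i + j] c = a * (⇑τ)^[i] (b * (⇑τ)^[j] c)) ∧
      ((1 : A) * (⇑τ)^[0] a = a) ∧
      (a * (⇑τ)^[i] (1 : A) = a) := by
  intro i j l a b c ha hb _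
  exact ⟨SetLike.twist_mul_mem_graded (fun n x hx => hτ n x hx) ha hb i,
    iterate_twist_mul_assoc τ i j a b c, one_mul a, by rw [iterate_map_one, mul_one]⟩
end

section
/- Let E = R[x; σ, δ] be an Ore extension over a commutative integral domain R with σ ≠ id of finite order m, J ∈ k^× with J^m = 1, κ ∈ Frac(R) with δ(h) = κ(σ(h) − h) for all h, and let ν be the k-algebra automorphism of E with ν|_R = σ^{-1} and ν(x) = Jx + Jκ − σ_q^{-1}(κ) (assuming Jκ − σ_q^{-1}(κ) ∈ R, where σ_q extends σ to Frac(R)). Then ν has the same order as σ. -/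
/-!
In the localised extension the element `x + κ` is an eigenvector of `ν`:
`ν (x + κ) = J x + J κ - σ_q⁻¹ κ + σ_q⁻¹ κ = J (x + κ)`. Hence
`νⁿ x = Jⁿ x + (Jⁿ κ - σ_q⁻ⁿ κ)`, the bracket lying in `R`, while `νⁿ` acts on `R` as `σ⁻ⁿ`.
If `σⁿ = 1` then `m ∣ n`, so `Jⁿ = 1`, `σ_q⁻ⁿ = 1` and `νⁿ` fixes the generators `R` and `x`;
conversely `νⁿ = 1` forces `σ⁻ⁿ = 1` because `R` embeds in `E`.
-/

open Function

theorem iterate_eq_id_of_semiconj_algebraMap {R K G : Type*} [CommRing R] [CommRing K]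
    [Algebra R K] [IsFractionRing R K] [FunLike G K K] [RingHomClass G K K]
    {τ : R → R} {τq : G} (h : Semiconj (algebraMap R K) τ τq) {n : ℕ} (hn : τ^[n] = id) :
    (⇑τq)^[n] = id := by
  have hext : (τq : K →+* K) ^ n = RingHom.id K :=
    IsLocalization.ringHom_ext (nonZeroDivisors R) <| RingHom.ext fun r => by
      rw [RingHom.comp_apply, RingHom.coe_pow, RingHom.coe_coe, ← h.iterate_right n r, hn]
      rfl
  simpa only [RingHom.coe_pow, RingHom.coe_coe, RingHom.coe_id] using congrArg DFunLike.coe hext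

theorem injective_of_sum_mul_pow_eq_zero {k R E : Type*} [CommSemiring k] [Ring R] [Ring E]
    [Algebra k R] [Algebra k E] {ι : R →ₐ[k] E} {x : E}
    (hind : ∀ (l : ℕ) (g : ℕ → R),
      (∑ i ∈ Finset.range l, ι (g i) * x ^ i) = 0 → ∀ i < l, g i = 0) :
    Injective ι :=
  (injective_iff_map_eq_zero ι).2 fun r hr =>
    hind 1 (fun _ => r) (by simp [hr]) 0 Nat.one_pos

section OreExtension

variable {k E : Type*} [CommSemiring k] [Semiring E] [Algebra k E]

theorem eq_id_of_apply_eq_self_of_span {R : Type*} [Semiring R] [Algebra k R]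
    {ι : R →ₐ[k] E} {x : E}
    (hspan : ∀ e : E, ∃ (l : ℕ) (g : ℕ → R), e = ∑ i ∈ Finset.range l, ι (g i) * x ^ i)
    {F : Type*} [FunLike F E E] [AlgHomClass F k E E] (φ : F)
    (hι : ∀ f, φ (ι f) = ι f) (hx : φ x = x) : ⇑φ = id := by
  funext e
  obtain ⟨l, g, rfl⟩ := hspan e
  simp only [map_sum, map_mul, map_pow, hι, hx, id]

theorem exists_iterate_apply_eq_pow_mul_add {R K : Type*} [CommSemiring R] [CommRing K]
    [Algebra k R] [Algebra k K] [Algebra R K] [IsScalarTower k R K] {ι : R →ₐ[k] E} {x : E}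
    {F : Type*} [FunLike F E E] [AlgHomClass F k E E] {ν : F} {τ : R → R}
    {G : Type*} [FunLike G K K] [RingHomClass G K K] {τq : G} {J : k} {b : R} {κ : K}
    (hνι : Semiconj ι τ ν) (hτq : Semiconj (algebraMap R K) τ τq)
    (hJ : τq (algebraMap k K J) = algebraMap k K J)
    (hνx : ν x = algebraMap k E J * x + ι b)
    (hb : algebraMap R K b = algebraMap k K J * κ - τq κ) (n : ℕ) :
    ∃ c : R, (⇑ν)^[n] x = algebraMap k E (J ^ n) * x + ι c ∧
      algebraMap R K c = algebraMap k K (J ^ n) * κ - (⇑τq)^[n] κ := by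
  induction n with
  | zero => exact ⟨0, by simp⟩
  | succ n ih =>
    obtain ⟨c, hx, hc⟩ := ih
    refine ⟨J ^ n • b + τ c, ?_, ?_⟩
    · rw [iterate_succ_apply', hx, map_add, map_mul, AlgHomClass.commutes, hνx, ← hνι c,
        map_add, AlgHom.map_smul_of_tower, Algebra.smul_def, map_pow, map_pow, mul_add,
        ← mul_assoc, ← pow_succ, add_assoc]
    · rw [iterate_succ_apply', map_add, hτq c, hc, Algebra.smul_def,
        IsScalarTower.algebraMap_apply k R K, map_mul, hb, map_sub, map_mul, map_pow, map_pow,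
        map_pow, ← IsScalarTower.algebraMap_apply, hJ, map_pow]
      ring

end OreExtension

theorem nakayama_orderOf_eq_general
    (k : Type*) [Field k] (R : Type*) [CommRing R] [Algebra k R]
    (σ : R ≃ₐ[k] R)
    (m : ℕ) (horder : orderOf σ = m)
    (κ : FractionRing R)
    (σq : FractionRing R ≃+* FractionRing R)
    (hσq : ∀ r : R, σq (algebraMap R (FractionRing R) r) = algebraMap R (FractionRing R) (σ r))
    (J : k) (hJm : J ^ m = 1)
    (b : R)
    (hb : algebraMap R (FractionRing R) b =
      algebraMap k (FractionRing R) J * κ - σq.symm κ)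
    (E : Type*) [Ring E] [Algebra k E] (ι : R →ₐ[k] E) (x : E)
    (hspan : ∀ e : E, ∃ (l : ℕ) (g : ℕ → R), e = ∑ i ∈ Finset.range l, ι (g i) * x ^ i)
    (hind : ∀ (l : ℕ) (g : ℕ → R),
      (∑ i ∈ Finset.range l, ι (g i) * x ^ i) = 0 → ∀ i < l, g i = 0)
    (ν : E ≃ₐ[k] E)
    (hνR : ∀ f : R, ν (ι f) = ι (σ.symm f))
    (hνx : ν x = algebraMap k E J * x + ι b) :
    orderOf ν = orderOf σ := by
  have hνι : Semiconj ι ⇑σ⁻¹ ν := fun f => (hνR f).symm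
  have hσq_inv : Semiconj (algebraMap R (FractionRing R)) ⇑σ⁻¹ σq.symm :=
    Semiconj.inverses_right (fun r => (hσq r).symm) σ.apply_symm_apply σq.symm_apply_apply
  have hJq : σq.symm (algebraMap k _ J) = algebraMap k _ J := by
    rw [IsScalarTower.algebraMap_apply k R, ← hσq_inv, AlgEquiv.commutes]
  rw [← orderOf_inv σ, orderOf_eq_orderOf_iff]
  intro n
  have hνpow : ∀ f, (ν ^ n) (ι f) = ι ((σ⁻¹ ^ n) f) := fun f => by
    rw [AlgEquiv.coe_pow, AlgEquiv.coe_pow, hνι.iterate_right n f]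
  constructor
  · intro hνn
    ext f
    exact injective_of_sum_mul_pow_eq_zero hind (by rw [← hνpow, hνn]; rfl)
  · intro hσn
    have hσn' : (⇑σ⁻¹)^[n] = id := by rw [← AlgEquiv.coe_pow, hσn]; rfl
    have hJn : J ^ n = 1 := by
      obtain ⟨c, rfl⟩ := horder ▸ orderOf_inv σ ▸ orderOf_dvd_of_pow_eq_one hσn
      rw [pow_mul, hJm, one_pow]
    obtain ⟨c, hx, hc⟩ := exists_iterate_apply_eq_pow_mul_add hνι hσq_inv hJq hνx hb n
    have hc0 : c = 0 := IsFractionRing.injective R (FractionRing R) <| by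
      rw [hc, iterate_eq_id_of_semiconj_algebraMap hσq_inv hσn', hJn, map_one, one_mul, id_eq,
        sub_self, map_zero]
    refine DFunLike.coe_injective <| eq_id_of_apply_eq_self_of_span hspan (ν ^ n) ?_ ?_
    · intro f
      rw [hνpow, hσn]
      rfl
    · rw [AlgEquiv.coe_pow, hx, hJn, hc0, map_one, one_mul, map_zero, add_zero]

/-- The Nakayama automorphism `ν` of `E = R[x; σ, δ]` (with `σ ≠ id` of
finite order `m`, `ν|_R = σ⁻¹`, `ν(x) = Jx + Jκ − σ_q⁻¹(κ)`) has the same order as `σ`. -/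
theorem nakayama_orderOf_eq
    (k : Type*) [Field k] (R : Type*) [CommRing R] [IsDomain R] [Algebra k R]
    (σ : R ≃ₐ[k] R) (hσ : σ ≠ AlgEquiv.refl)
    (m : ℕ) (hm : 0 < m) (horder : orderOf σ = m)
    (δ : R →ₗ[k] R)
    (hLeib : ∀ f g : R, δ (f * g) = δ f * g + σ f * δ g)
    (κ : FractionRing R)
    (hκ : ∀ h : R, algebraMap R (FractionRing R) (δ h) =
      κ * (algebraMap R (FractionRing R) (σ h) - algebraMap R (FractionRing R) h))
    (σq : FractionRing R ≃+* FractionRing R)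
    (hσq : ∀ r : R, σq (algebraMap R (FractionRing R) r) = algebraMap R (FractionRing R) (σ r))
    (J : k) (hJ : J ≠ 0) (hJm : J ^ m = 1)
    (b : R)
    (hb : algebraMap R (FractionRing R) b =
      algebraMap k (FractionRing R) J * κ - σq.symm κ)
    (E : Type*) [Ring E] [Algebra k E] (ι : R →ₐ[k] E) (x : E)
    (hrel : ∀ f : R, x * ι f = ι (σ f) * x + ι (δ f))
    (hspan : ∀ e : E, ∃ (l : ℕ) (g : ℕ → R), e = ∑ i ∈ Finset.range l, ι (g i) * x ^ i)
    (hind : ∀ (l : ℕ) (g : ℕ → R),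
      (∑ i ∈ Finset.range l, ι (g i) * x ^ i) = 0 → ∀ i < l, g i = 0)
    (ν : E ≃ₐ[k] E)
    (hνR : ∀ f : R, ν (ι f) = ι (σ.symm f))
    (hνx : ν x = algebraMap k E J * x + ι b) :
    orderOf ν = orderOf σ :=
  nakayama_orderOf_eq_general k R σ m horder κ σq hσq J hJm b hb E ι x hspan hind ν hνR hνx
end

section
/- Let R be a commutative integral domain, σ an automorphism of R with σ ≠ id, δ the σ-derivation with δ(h) = κ(σ(h) − h) for a fixed κ ∈ Frac(R), E = R[x; σ, δ], J ∈ k^×, and b ∈ R. If the assignment ν|_R = σ^{-1}, ν(x) = Jx + b extends to a k-algebra homomorphism E → E (equivalently, (Jx + b)·σ^{-1}(f) = f·(Jx + b) + σ^{-1}(δ(f)) in E for all f ∈ R), then b = Jκ − σ_q^{-1}(κ) in Frac(R), where σ_q is the extension of σ to Frac(R). -/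
/-!
Pick `f ∈ R` with `σ f ≠ f`. Expanding `(Jx + b)·σ⁻¹(f)` with the Ore relation and comparing the
parts without `x` gives `J·δ(σ⁻¹f) + b·σ⁻¹f = f·b + σ⁻¹(δ f)` in `R`. In `Frac(R)` both derivation
terms are multiples of `f - σ⁻¹f`, namely `κ (f - σ⁻¹f)` and `σ_q⁻¹(κ) (f - σ⁻¹f)`, so the identity
reads `(Jκ - σ_q⁻¹κ - b)(f - σ⁻¹f) = 0`, and `f - σ⁻¹f ≠ 0`.
-/

theorem mul_add_mul_eq_of_linear_mul_eq {R E F : Type*} [CommRing R] [Ring E] [FunLike F R E]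
    [RingHomClass F R E] (ι : F)
    (hinj : Function.Injective ι) (σ δ : R → R) (x : E)
    (hrel : ∀ a : R, x * ι a = ι (σ a) * x + ι (δ a)) {a b c g : R}
    (h : (ι c * x + ι b) * ι a = ι (σ a) * (ι c * x + ι b) + ι g) :
    c * δ a + b * a = σ a * b + g := by
  have hx : ι c * x * ι a = ι (σ a) * (ι c * x) + ι (c * δ a) := by
    rw [mul_assoc, hrel, mul_add, ← mul_assoc, ← mul_assoc, ← map_mul, ← map_mul, mul_comm c,
      map_mul]
  rw [add_mul, hx, mul_add, add_assoc, add_assoc] at h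
  apply hinj
  simpa only [map_add, map_mul] using add_left_cancel h

theorem nakayama_b_determined_general
    (k : Type*) [Field k] (R : Type*) [CommRing R] [IsDomain R] [Algebra k R]
    (σ : R ≃ₐ[k] R) (hσ : σ ≠ AlgEquiv.refl)
    (κ : FractionRing R)
    (δ : R →ₗ[k] R)
    (hκ : ∀ h : R, algebraMap R (FractionRing R) (δ h) =
      κ * (algebraMap R (FractionRing R) (σ h) - algebraMap R (FractionRing R) h))
    (σq : FractionRing R ≃+* FractionRing R)
    (hσq : ∀ r : R, σq (algebraMap R (FractionRing R) r) = algebraMap R (FractionRing R) (σ r))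
    (E : Type*) [Ring E] [Algebra k E] (ι : R →ₐ[k] E) (x : E)
    (hinj : Function.Injective ι)
    (hrel : ∀ f : R, x * ι f = ι (σ f) * x + ι (δ f))
    (J : k) (b : R)
    (hcomm : ∀ f : R,
      (algebraMap k E J * x + ι b) * ι (σ.symm f) =
        ι f * (algebraMap k E J * x + ι b) + ι (σ.symm (δ f))) :
    algebraMap R (FractionRing R) b =
      algebraMap k (FractionRing R) J * κ - σq.symm κ := by
  obtain ⟨f, hf⟩ := DFunLike.ne_iff.mp hσ
  set φ := algebraMap R (FractionRing R)
  have hφ_symm (r : R) : φ (σ.symm r) = σq.symm (φ r) :=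
    (σq.symm_apply_eq.mpr (by rw [hσq, σ.apply_symm_apply])).symm
  have hcomm_f := hcomm f
  rw [← ι.commutes J] at hcomm_f
  have hR := mul_add_mul_eq_of_linear_mul_eq ι hinj σ δ x hrel
    (a := σ.symm f) (by simpa only [σ.apply_symm_apply] using hcomm_f)
  have hK := congrArg φ hR
  have hδ_symm : φ (σ.symm (δ f)) = σq.symm κ * (φ f - φ (σ.symm f)) := by
    rw [hφ_symm, hκ, map_mul, map_sub, ← hφ_symm, ← hφ_symm, σ.symm_apply_apply]
  have hJ : φ (algebraMap k R J) = algebraMap k (FractionRing R) J :=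
    (IsScalarTower.algebraMap_apply k R (FractionRing R) J).symm
  simp only [map_add, map_mul, hκ, σ.apply_symm_apply, hδ_symm, hJ] at hK
  have hne : φ f - φ (σ.symm f) ≠ 0 := by
    rw [sub_ne_zero, (IsFractionRing.injective R (FractionRing R)).ne_iff]
    exact fun h => hf (σ.symm_apply_eq.mp h.symm).symm
  exact mul_right_cancel₀ hne (by linear_combination -hK)

/-- If `ν|_R = σ⁻¹`, `ν(x) = Jx + b` extends to an algebra homomorphism of
`E = R[x; σ, δ]` (equivalently `(Jx + b)·σ⁻¹(f) = f·(Jx + b) + σ⁻¹(δ(f))` for all `f`),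
then `b = Jκ − σ_q⁻¹(κ)` in `Frac(R)`. -/
theorem nakayama_b_determined
    (k : Type*) [Field k] (R : Type*) [CommRing R] [IsDomain R] [Algebra k R]
    (σ : R ≃ₐ[k] R) (hσ : σ ≠ AlgEquiv.refl)
    (κ : FractionRing R)
    (δ : R →ₗ[k] R)
    (hLeib : ∀ f g : R, δ (f * g) = δ f * g + σ f * δ g)
    (hκ : ∀ h : R, algebraMap R (FractionRing R) (δ h) =
      κ * (algebraMap R (FractionRing R) (σ h) - algebraMap R (FractionRing R) h))
    (σq : FractionRing R ≃+* FractionRing R)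
    (hσq : ∀ r : R, σq (algebraMap R (FractionRing R) r) = algebraMap R (FractionRing R) (σ r))
    (E : Type*) [Ring E] [Algebra k E] (ι : R →ₐ[k] E) (x : E)
    (hinj : Function.Injective ι)
    (hfree : ∀ a c : R, ι a * x + ι c = 0 → a = 0 ∧ c = 0)
    (hrel : ∀ f : R, x * ι f = ι (σ f) * x + ι (δ f))
    (J : k) (hJ : J ≠ 0) (b : R)
    (hcomm : ∀ f : R,
      (algebraMap k E J * x + ι b) * ι (σ.symm f) =
        ι f * (algebraMap k E J * x + ι b) + ι (σ.symm (δ f))) :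
    algebraMap R (FractionRing R) b =
      algebraMap k (FractionRing R) J * κ - σq.symm κ :=
  nakayama_b_determined_general k R σ hσ κ δ hκ σq hσq E ι x hinj hrel J b hcomm
end

section
/- Let R be a k-algebra, σ ∈ Aut_k(R), δ a σ-derivation, and E = R[x; σ, δ]. Then the multiplication map E ⊗_R E → E fits into a short exact sequence of E-bimodules 0 → E^σ ⊗_R E → E ⊗_R E → E → 0, where the first map sends 1 ⊗ 1 to x ⊗ 1 − 1 ⊗ x (and E^σ denotes E with right R-action twisted by σ). In particular, the map E^σ ⊗_R E → E ⊗_R E determined by 1 ⊗ 1 ↦ x ⊗ 1 − 1 ⊗ x is injective and its image equals the kernel of the multiplication map. -/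
open TensorProduct

section ModuleStructures

variable (R E : Type*) [CommRing R] [Ring E]

/-- `E` viewed as an `R`-module via right multiplication twisted by `f`:
`r • e = e * f r`. -/
def RightTw (_f : R →+* E) : Type _ := E

instance (f : R →+* E) : AddCommGroup (RightTw R E f) := inferInstanceAs (AddCommGroup E)

noncomputable instance (f : R →+* E) : Module R (RightTw R E f) :=
  Module.compHom E (f.toOpposite fun a b => by
    simpa [Commute, SemiconjBy, ← map_mul] using congrArg f (mul_comm a b))

/-- `E` viewed as an `R`-module via left multiplication: `r • e = f r * e`. -/
def LeftMod (_f : R →+* E) : Type _ := E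

instance (f : R →+* E) : AddCommGroup (LeftMod R E f) := inferInstanceAs (AddCommGroup E)

noncomputable instance (f : R →+* E) : Module R (LeftMod R E f) := Module.compHom E f

/-- The identity of `E`, viewed as landing in `RightTw R E f`. -/
def toRightTw (f : R →+* E) (e : E) : RightTw R E f := e

/-- The identity of `E`, viewed as landing in `LeftMod R E f`. -/
def toLeftMod (f : R →+* E) (e : E) : LeftMod R E f := e

end ModuleStructures

/-! Because `E` is free as a left `R`-module on the powers of `x`, every element of
`E^σ ⊗_R E` is uniquely a finite sum `∑ cᵢ ⊗ xⁱ`, and `ρ` sends it to `∑ (cᵢ x ⊗ xⁱ - cᵢ ⊗ xⁱ⁺¹)`.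
The coefficient of `xⁱ⁺¹` in `ρ s` is therefore `cᵢ₊₁ x - cᵢ`; at the top index `a` of `s` it is
`-cₐ ≠ 0`, so `ρ` is injective. Exactness in the middle comes from the telescoping identity
`ρ (∑_{j<n} e xʲ ⊗ xⁿ⁻¹⁻ʲ) = e xⁿ ⊗ 1 - e ⊗ xⁿ`, which puts `t - μ t ⊗ 1` in the range of `ρ`
for every `t`. -/

open Finset

section PowerBasis

variable {R E : Type*} [CommRing R] [Ring E] (f : R →+* E) (x : E)

lemma smul_toLeftMod (r : R) (e : E) :
    r • toLeftMod R E f e = toLeftMod R E f (f r * e) := rfl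

lemma linearIndependent_toLeftMod_pow
    (hind : ∀ (l : ℕ) (g : ℕ → R), ∑ i ∈ range l, f (g i) * x ^ i = 0 → ∀ i < l, g i = 0) :
    LinearIndependent R fun i : ℕ => toLeftMod R E f (x ^ i) := by
  classical
  refine linearIndependent_iff'.mpr fun s g hs i hi => ?_
  have hsub := s.subset_range_sup_succ
  have := hind _ (fun i => if i ∈ s then g i else 0) ?_ i (mem_range.mp (hsub hi))
  · simpa [hi] using this
  · rw [← sum_subset hsub fun j _ hj => by simp [hj]]
    simp only [smul_toLeftMod] at hs
    exact Eq.trans (sum_congr rfl fun j hj => by rw [if_pos hj]; rfl) hs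

lemma top_le_span_toLeftMod_pow
    (hspan : ∀ e : E, ∃ (l : ℕ) (g : ℕ → R), e = ∑ i ∈ range l, f (g i) * x ^ i) :
    ⊤ ≤ Submodule.span R (Set.range fun i : ℕ => toLeftMod R E f (x ^ i)) := by
  intro e _
  obtain ⟨l, g, he⟩ := hspan e
  have he : e = ∑ i ∈ range l, g i • toLeftMod R E f (x ^ i) := he
  rw [he]
  exact Submodule.sum_mem _ fun i _ => Submodule.smul_mem _ _ (Submodule.subset_span ⟨i, rfl⟩)

noncomputable def basisPow
    (hspan : ∀ e : E, ∃ (l : ℕ) (g : ℕ → R), e = ∑ i ∈ range l, f (g i) * x ^ i)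
    (hind : ∀ (l : ℕ) (g : ℕ → R), ∑ i ∈ range l, f (g i) * x ^ i = 0 → ∀ i < l, g i = 0) :
    Module.Basis ℕ R (LeftMod R E f) :=
  .mk (linearIndependent_toLeftMod_pow f x hind) (top_le_span_toLeftMod_pow f x hspan)

lemma basisPow_apply
    (hspan : ∀ e : E, ∃ (l : ℕ) (g : ℕ → R), e = ∑ i ∈ range l, f (g i) * x ^ i)
    (hind : ∀ (l : ℕ) (g : ℕ → R), ∑ i ∈ range l, f (g i) * x ^ i = 0 → ∀ i < l, g i = 0)
    (i : ℕ) : basisPow f x hspan hind i = toLeftMod R E f (x ^ i) :=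
  Module.Basis.mk_apply _ _ _

end PowerBasis

section TensorBasis

variable {R M N κ : Type*} [CommRing R] [AddCommGroup M] [Module R M] [AddCommGroup N]
  [Module R N] [DecidableEq κ] (𝒞 : Module.Basis κ R N)

lemma TensorProduct.equivFinsuppOfBasisRight_tmul_basis (m : M) (k : κ) :
    equivFinsuppOfBasisRight 𝒞 (m ⊗ₜ 𝒞 k) = Finsupp.single k m := by
  simp

lemma TensorProduct.equivFinsuppOfBasisRight_symm_single (m : M) (k : κ) :
    (equivFinsuppOfBasisRight 𝒞).symm (Finsupp.single k m) = m ⊗ₜ 𝒞 k :=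
  (LinearEquiv.symm_apply_eq _).mpr (equivFinsuppOfBasisRight_tmul_basis 𝒞 m k).symm

end TensorBasis

section TwoSidedTensor

variable {R E : Type*} [CommRing R] [Ring E] (f : R →+* E)

lemma smul_toRightTw (r : R) (e : E) :
    r • toRightTw R E f e = toRightTw R E f (e * f r) := rfl

def RightTw.equiv : RightTw R E f ≃+ E := AddEquiv.refl E

@[simp]
lemma RightTw.equiv_toRightTw (e : E) : RightTw.equiv f (toRightTw R E f e) = e := rfl

noncomputable def tmulOne : E →+ RightTw R E f ⊗[R] LeftMod R E f where
  toFun e := toRightTw R E f e ⊗ₜ[R] toLeftMod R E f 1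
  map_zero' := zero_tmul _ _
  map_add' a b := add_tmul (toRightTw R E f a) (toRightTw R E f b) _

lemma tmulOne_apply (e : E) :
    tmulOne f e = toRightTw R E f e ⊗ₜ[R] toLeftMod R E f 1 := rfl

end TwoSidedTensor

section KoszulMap

variable {R E : Type*} [CommRing R] [Ring E] {f g : R →+* E} {x : E}
variable (ρ : RightTw R E g ⊗[R] LeftMod R E f →+ RightTw R E f ⊗[R] LeftMod R E f)
  (hρ : ∀ e e' : E, ρ (toRightTw R E g e ⊗ₜ[R] toLeftMod R E f e') =
    toRightTw R E f (e * x) ⊗ₜ[R] toLeftMod R E f e' -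
      toRightTw R E f e ⊗ₜ[R] toLeftMod R E f (x * e'))
variable (μ : RightTw R E f ⊗[R] LeftMod R E f →+ E)
  (hμ : ∀ e e' : E, μ (toRightTw R E f e ⊗ₜ[R] toLeftMod R E f e') = e * e')

include hρ in
lemma rho_telescope (e : E) (n : ℕ) :
    ρ (∑ j ∈ range n, toRightTw R E g (e * x ^ j) ⊗ₜ[R] toLeftMod R E f (x ^ (n - 1 - j))) =
      toRightTw R E f (e * x ^ n) ⊗ₜ[R] toLeftMod R E f 1 -
        toRightTw R E f e ⊗ₜ[R] toLeftMod R E f (x ^ n) := by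
  have step : ∀ j ∈ range n,
      ρ (toRightTw R E g (e * x ^ j) ⊗ₜ[R] toLeftMod R E f (x ^ (n - 1 - j))) =
        toRightTw R E f (e * x ^ (j + 1)) ⊗ₜ[R] toLeftMod R E f (x ^ (n - (j + 1))) -
          toRightTw R E f (e * x ^ j) ⊗ₜ[R] toLeftMod R E f (x ^ (n - j)) := by
    intro j hj
    have hj : j < n := mem_range.mp hj
    rw [hρ, mul_assoc, ← pow_succ, ← pow_succ', Nat.sub_sub, add_comm 1 j,
      show n - (j + 1) + 1 = n - j by omega]
  rw [map_sum, sum_congr rfl step, sum_range_sub (fun j =>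
    toRightTw R E f (e * x ^ j) ⊗ₜ[R] toLeftMod R E f (x ^ (n - j))), Nat.sub_self, pow_zero,
    mul_one, Nat.sub_zero]

include hρ hμ in
lemma mu_rho_eq_zero (s : RightTw R E g ⊗[R] LeftMod R E f) : μ (ρ s) = 0 := by
  induction s with
  | zero => simp
  | tmul m n =>
    obtain ⟨e, rfl⟩ : ∃ e : E, toRightTw R E g e = m := ⟨m, rfl⟩
    obtain ⟨e', rfl⟩ : ∃ e' : E, toLeftMod R E f e' = n := ⟨n, rfl⟩
    rw [hρ, map_sub, hμ, hμ, mul_assoc, sub_self]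
  | add s t hs ht => rw [map_add, map_add, hs, ht, add_zero]

include hρ hμ in
lemma sub_tmulOne_mem_range
    (hspan : ∀ e : E, ∃ (l : ℕ) (c : ℕ → R), e = ∑ i ∈ range l, f (c i) * x ^ i)
    (t : RightTw R E f ⊗[R] LeftMod R E f) : t - tmulOne f (μ t) ∈ ρ.range := by
  change (AddMonoidHom.id (RightTw R E f ⊗[R] LeftMod R E f) - (tmulOne f).comp μ) t ∈ ρ.range
  induction t with
  | zero => simp
  | add t t' ht ht' => rw [map_add]; exact add_mem ht ht'
  | tmul m n =>
    obtain ⟨e, rfl⟩ : ∃ e : E, toRightTw R E f e = m := ⟨m, rfl⟩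
    obtain ⟨l, c, hn⟩ := hspan n
    have hn : n = ∑ i ∈ range l, c i • toLeftMod R E f (x ^ i) := hn
    rw [hn, tmul_sum, map_sum]
    refine sum_mem fun i _ => ?_
    rw [← smul_tmul, smul_toRightTw]
    refine ⟨-∑ j ∈ range i, toRightTw R E g (e * f (c i) * x ^ j) ⊗ₜ[R]
      toLeftMod R E f (x ^ (i - 1 - j)), ?_⟩
    rw [map_neg, rho_telescope ρ hρ, neg_sub, AddMonoidHom.sub_apply, AddMonoidHom.id_apply,
      AddMonoidHom.comp_apply, hμ, tmulOne_apply]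

variable (b : Module.Basis ℕ R (LeftMod R E f)) (hb : ∀ i, b i = toLeftMod R E f (x ^ i))

include hρ hb in
lemma equivFinsuppOfBasisRight_rho_succ (s : RightTw R E g ⊗[R] LeftMod R E f) (i : ℕ) :
    RightTw.equiv f (equivFinsuppOfBasisRight b (ρ s) (i + 1)) =
      RightTw.equiv g (equivFinsuppOfBasisRight b s (i + 1)) * x -
        RightTw.equiv g (equivFinsuppOfBasisRight b s i) := by
  obtain ⟨c, rfl⟩ := (equivFinsuppOfBasisRight b).symm.surjective s
  rw [LinearEquiv.apply_symm_apply]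
  induction c using Finsupp.induction_linear with
  | zero => simp
  | add c d hc hd =>
    simp only [map_add, Finsupp.add_apply, hc, hd, add_mul]
    abel
  | single j m =>
    obtain ⟨e, rfl⟩ : ∃ e : E, toRightTw R E g e = m := ⟨m, rfl⟩
    rw [equivFinsuppOfBasisRight_symm_single, hb, hρ, ← pow_succ', ← hb, ← hb, map_sub,
      equivFinsuppOfBasisRight_tmul_basis, equivFinsuppOfBasisRight_tmul_basis]
    simp only [Finsupp.sub_apply, Finsupp.single_apply]
    split_ifs <;> first | omega | simp

include hρ hb in
lemma rho_injective : Function.Injective ρ := by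
  refine (injective_iff_map_eq_zero ρ).mpr fun s hs => ?_
  by_contra hne
  set c := equivFinsuppOfBasisRight b s
  have hc : c.support.Nonempty := Finsupp.support_nonempty_iff.mpr (by simpa [c] using hne)
  set a := c.support.max' hc
  have hca : c a ≠ 0 := Finsupp.mem_support_iff.mp (c.support.max'_mem hc)
  have htop : c (a + 1) = 0 :=
    Finsupp.notMem_support_iff.mp fun h => by have := c.support.le_max' _ h; omega
  have := equivFinsuppOfBasisRight_rho_succ ρ hρ b hb s a
  rw [hs, map_zero, Finsupp.coe_zero, Pi.zero_apply, map_zero, htop, map_zero, zero_mul,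
    zero_sub, eq_comm, neg_eq_zero, map_eq_zero_iff _ (RightTw.equiv g).injective] at this
  exact hca this

end KoszulMap

theorem ore_extension_short_exact_sequence_general
    (k : Type*) [Field k] (R E : Type*) [CommRing R] [Ring E]
    [Algebra k R] [Algebra k E]
    (σ : R ≃ₐ[k] R)
    (ι : R →ₐ[k] E) (x : E)
    (hspan : ∀ e : E, ∃ (l : ℕ) (g : ℕ → R), e = ∑ i ∈ Finset.range l, ι (g i) * x ^ i)
    (hind : ∀ (l : ℕ) (g : ℕ → R),
      (∑ i ∈ Finset.range l, ι (g i) * x ^ i) = 0 → ∀ i < l, g i = 0)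
    (μ : RightTw R E ι.toRingHom ⊗[R] LeftMod R E ι.toRingHom →+ E)
    (hμ : ∀ e e' : E,
      μ (toRightTw R E ι.toRingHom e ⊗ₜ[R] toLeftMod R E ι.toRingHom e') = e * e')
    (ρ : RightTw R E (ι.toRingHom.comp σ.toAlgHom.toRingHom) ⊗[R] LeftMod R E ι.toRingHom →+
      RightTw R E ι.toRingHom ⊗[R] LeftMod R E ι.toRingHom)
    (hρ : ∀ e e' : E,
      ρ (toRightTw R E (ι.toRingHom.comp σ.toAlgHom.toRingHom) e ⊗ₜ[R]
          toLeftMod R E ι.toRingHom e') =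
        toRightTw R E ι.toRingHom (e * x) ⊗ₜ[R] toLeftMod R E ι.toRingHom e' -
          toRightTw R E ι.toRingHom e ⊗ₜ[R] toLeftMod R E ι.toRingHom (x * e')) :
    Function.Surjective μ ∧ Function.Injective ρ ∧
      ∀ t, μ t = 0 ↔ t ∈ Set.range ρ := by
  refine ⟨fun e => ⟨_, (hμ e 1).trans (mul_one e)⟩,
    rho_injective ρ hρ _ (basisPow_apply _ x hspan hind), fun t => ⟨fun ht => ?_, ?_⟩⟩
  · have := sub_tmulOne_mem_range ρ hρ μ hμ hspan t
    rwa [ht, map_zero, sub_zero] at this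
  · rintro ⟨s, rfl⟩
    exact mu_rho_eq_zero ρ hρ μ hμ s

/-- For an Ore extension `E = R[x; σ, δ]`, there is a short exact sequence
of `E`-bimodules `0 → E^σ ⊗_R E → E ⊗_R E → E → 0` where the first map is determined by
`1 ⊗ 1 ↦ x ⊗ 1 − 1 ⊗ x` (i.e. `e ⊗ e' ↦ ex ⊗ e' − e ⊗ xe'`) and the second is the
multiplication map: the multiplication map is surjective, the first map is injective, and
its range equals the kernel of the multiplication map. -/
theorem ore_extension_short_exact_sequence
    (k : Type*) [Field k] (R E : Type*) [CommRing R] [Ring E]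
    [Algebra k R] [Algebra k E]
    (σ : R ≃ₐ[k] R) (δ : R →ₗ[k] R)
    (hLeib : ∀ f g : R, δ (f * g) = δ f * g + σ f * δ g)
    (ι : R →ₐ[k] E) (x : E)
    (hrel : ∀ f : R, x * ι f = ι (σ f) * x + ι (δ f))
    (hspan : ∀ e : E, ∃ (l : ℕ) (g : ℕ → R), e = ∑ i ∈ Finset.range l, ι (g i) * x ^ i)
    (hind : ∀ (l : ℕ) (g : ℕ → R),
      (∑ i ∈ Finset.range l, ι (g i) * x ^ i) = 0 → ∀ i < l, g i = 0)
    (μ : RightTw R E ι.toRingHom ⊗[R] LeftMod R E ι.toRingHom →+ E)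
    (hμ : ∀ e e' : E,
      μ (toRightTw R E ι.toRingHom e ⊗ₜ[R] toLeftMod R E ι.toRingHom e') = e * e')
    (ρ : RightTw R E (ι.toRingHom.comp σ.toAlgHom.toRingHom) ⊗[R] LeftMod R E ι.toRingHom →+
      RightTw R E ι.toRingHom ⊗[R] LeftMod R E ι.toRingHom)
    (hρ : ∀ e e' : E,
      ρ (toRightTw R E (ι.toRingHom.comp σ.toAlgHom.toRingHom) e ⊗ₜ[R]
          toLeftMod R E ι.toRingHom e') =
        toRightTw R E ι.toRingHom (e * x) ⊗ₜ[R] toLeftMod R E ι.toRingHom e' -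
          toRightTw R E ι.toRingHom e ⊗ₜ[R] toLeftMod R E ι.toRingHom (x * e')) :
    Function.Surjective μ ∧ Function.Injective ρ ∧
      ∀ t, μ t = 0 ↔ t ∈ Set.range ρ :=
  ore_extension_short_exact_sequence_general k R E σ ι x hspan hind μ hμ ρ hρ
end

section
/- Let R = k[z_1,...,z_n] with char k = 0, δ a k-linear derivation of R with δ(z_p) = δ_p, and E = R[x; δ] the differential Ore extension (relation xf = fx + δ(f)). Define ν : E → E as the k-algebra endomorphism with ν|_R = id and ν(x) = x + ∇·X_δ where ∇·X_δ = Σ_{p=1}^n ∂δ_p/∂z_p. Then ν is a well-defined k-algebra automorphism of E. -/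
open MvPolynomial

section Aux

variable {k : Type*} [CommSemiring k] {R : Type*} [CommRing R] [Algebra k R]
  {E : Type*} [Ring E] [Algebra k E]
  (δ : Derivation k R R) (ι : R →ₐ[k] E) (x : E)
  (hrel : ∀ f, x * ι f = ι f * x + ι (δ f))
  (hspan : ∀ e : E, ∃ (l : ℕ) (g : ℕ → R),
      e = ∑ i ∈ Finset.range l, ι (g i) * x ^ i)
  (hind : ∀ (l : ℕ) (g : ℕ → R),
      (∑ i ∈ Finset.range l, ι (g i) * x ^ i) = 0 → ∀ i < l, g i = 0)

/-- padding a representation to a longer length -/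
lemma pad_sum (z : E) {l L : ℕ} (h : l ≤ L) (g : ℕ → R) :
    ∑ i ∈ Finset.range L, ι (if i < l then g i else 0) * z ^ i
      = ∑ i ∈ Finset.range l, ι (g i) * z ^ i := by
  rw [← Finset.sum_subset (Finset.range_subset_range.2 h)
      (fun i _ hi => by
        have : ¬ i < l := fun h' => hi (Finset.mem_range.2 h')
        simp [this])]
  exact Finset.sum_congr rfl fun i hi => by rw [if_pos (Finset.mem_range.1 hi)]

include hind in
lemma rep_unique (z : E) {l l' : ℕ} {g g' : ℕ → R}
    (h : ∑ i ∈ Finset.range l, ι (g i) * x ^ i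
        = ∑ i ∈ Finset.range l', ι (g' i) * x ^ i) :
    ∑ i ∈ Finset.range l, ι (g i) * z ^ i
        = ∑ i ∈ Finset.range l', ι (g' i) * z ^ i := by
  set L := max l l' with hL
  set G : ℕ → R := fun i => if i < l then g i else 0 with hG
  set G' : ℕ → R := fun i => if i < l' then g' i else 0 with hG'
  have key : ∀ i < L, G i = G' i := by
    have h0 : ∑ i ∈ Finset.range L, ι (G i - G' i) * x ^ i = 0 := by
      have : ∑ i ∈ Finset.range L, ι (G i - G' i) * x ^ i
          = ∑ i ∈ Finset.range L, ι (G i) * x ^ i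
            - ∑ i ∈ Finset.range L, ι (G' i) * x ^ i := by
        rw [← Finset.sum_sub_distrib]
        exact Finset.sum_congr rfl fun i _ => by rw [map_sub, sub_mul]
      rw [this, hG, hG', pad_sum ι x (le_max_left l l'),
        pad_sum ι x (le_max_right l l'), h, sub_self]
    intro i hi
    exact sub_eq_zero.1 (hind L (fun i => G i - G' i) h0 i hi)
  calc ∑ i ∈ Finset.range l, ι (g i) * z ^ i
      = ∑ i ∈ Finset.range L, ι (G i) * z ^ i :=
        (pad_sum ι z (le_max_left l l') g).symm
    _ = ∑ i ∈ Finset.range L, ι (G' i) * z ^ i :=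
        Finset.sum_congr rfl fun i hi => by
          rw [key i (Finset.mem_range.1 hi)]
    _ = ∑ i ∈ Finset.range l', ι (g' i) * z ^ i :=
        pad_sum ι z (le_max_right l l') g'

/-- The substitution map `∑ ι(gᵢ) xⁱ ↦ ∑ ι(gᵢ) zⁱ`. -/
noncomputable def phi (z : E) (e : E) : E :=
  ∑ i ∈ Finset.range (hspan e).choose,
    ι ((hspan e).choose_spec.choose i) * z ^ i

include hind in
lemma phi_rep (z : E) {e : E} {l : ℕ} {g : ℕ → R}
    (h : e = ∑ i ∈ Finset.range l, ι (g i) * x ^ i) :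
    phi ι x hspan z e = ∑ i ∈ Finset.range l, ι (g i) * z ^ i := by
  apply rep_unique ι x hind z
  rw [← (hspan e).choose_spec.choose_spec, h]

include hind in
lemma phi_zero (z : E) : phi ι x hspan z 0 = 0 := by
  simpa using phi_rep ι x hspan hind z (e := 0) (l := 0) (g := fun _ => 0) (by simp)

include hind in
lemma phi_add (z : E) (a b : E) :
    phi ι x hspan z (a + b) = phi ι x hspan z a + phi ι x hspan z b := by
  obtain ⟨l, g, hg⟩ := hspan a
  obtain ⟨l', g', hg'⟩ := hspan b
  set L := max l l'
  set G : ℕ → R := fun i => if i < l then g i else 0 with hG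
  set G' : ℕ → R := fun i => if i < l' then g' i else 0 with hG'
  have hab : a + b = ∑ i ∈ Finset.range L, ι (G i + G' i) * x ^ i := by
    rw [hg, hg', ← pad_sum ι x (le_max_left l l') g,
      ← pad_sum ι x (le_max_right l l') g', ← Finset.sum_add_distrib]
    exact Finset.sum_congr rfl fun i _ => by rw [map_add, add_mul]
  rw [phi_rep ι x hspan hind z hab, phi_rep ι x hspan hind z hg,
    phi_rep ι x hspan hind z hg',
    ← pad_sum ι z (le_max_left l l') g, ← pad_sum ι z (le_max_right l l') g',
    ← Finset.sum_add_distrib]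
  exact Finset.sum_congr rfl fun i _ => by rw [map_add, add_mul]

include hind in
lemma phi_iota (z : E) (f : R) : phi ι x hspan z (ι f) = ι f := by
  simpa using phi_rep ι x hspan hind z (e := ι f) (l := 1) (g := fun _ => f) (by simp)

include hind in
lemma phi_x (z : E) : phi ι x hspan z x = z := by
  have := phi_rep ι x hspan hind z (e := x) (l := 2)
    (g := fun i => if i = 1 then 1 else 0) ?_
  · simpa [Finset.sum_range_succ] using this
  · simp [Finset.sum_range_succ]

include hind in
lemma phi_iota_mul (z : E) (f : R) (b : E) :
    phi ι x hspan z (ι f * b) = ι f * phi ι x hspan z b := by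
  obtain ⟨l, g, hg⟩ := hspan b
  have hfb : ι f * b = ∑ i ∈ Finset.range l, ι (f * g i) * x ^ i := by
    rw [hg, Finset.mul_sum]
    exact Finset.sum_congr rfl fun i _ => by rw [map_mul, mul_assoc]
  rw [phi_rep ι x hspan hind z hfb, phi_rep ι x hspan hind z hg, Finset.mul_sum]
  exact Finset.sum_congr rfl fun i _ => by rw [map_mul, mul_assoc]

include hrel hind in
lemma phi_x_mul (z : E) (hz : ∀ f, z * ι f = ι f * z + ι (δ f)) (b : E) :
    phi ι x hspan z (x * b) = z * phi ι x hspan z b := by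
  obtain ⟨l, g, hg⟩ := hspan b
  set g' : ℕ → R := fun i => Nat.casesOn i 0 g with hg'
  have hA : ∀ w : E, ∑ i ∈ Finset.range (l + 1), ι (g' i) * w ^ i
      = ∑ i ∈ Finset.range l, ι (g i) * w ^ (i + 1) := by
    intro w
    rw [Finset.sum_range_succ']
    simp [hg']
  have hxb : x * b = (∑ i ∈ Finset.range (l + 1), ι (g' i) * x ^ i)
      + ∑ i ∈ Finset.range l, ι (δ (g i)) * x ^ i := by
    rw [hg, Finset.mul_sum, hA, ← Finset.sum_add_distrib]
    refine Finset.sum_congr rfl fun i _ => ?_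
    rw [← mul_assoc, hrel (g i), add_mul, mul_assoc, ← pow_succ']
  rw [hxb, phi_add ι x hspan hind,
    phi_rep ι x hspan hind z (e := ∑ i ∈ Finset.range (l + 1), ι (g' i) * x ^ i) rfl,
    phi_rep ι x hspan hind z (e := ∑ i ∈ Finset.range l, ι (δ (g i)) * x ^ i) rfl,
    phi_rep ι x hspan hind z hg, hA, Finset.mul_sum, ← Finset.sum_add_distrib]
  refine Finset.sum_congr rfl fun i _ => ?_
  rw [← mul_assoc, hz (g i), add_mul, mul_assoc, ← pow_succ']

include hrel hind in
lemma phi_pow_mul (z : E) (hz : ∀ f, z * ι f = ι f * z + ι (δ f)) (m : ℕ) (b : E) :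
    phi ι x hspan z (x ^ m * b) = z ^ m * phi ι x hspan z b := by
  induction m generalizing b with
  | zero => simp
  | succ m ih =>
      rw [pow_succ', mul_assoc, phi_x_mul δ ι x hrel hspan hind z hz,
        ih b, pow_succ', mul_assoc]

include hrel hind in
lemma phi_mul (z : E) (hz : ∀ f, z * ι f = ι f * z + ι (δ f)) (a b : E) :
    phi ι x hspan z (a * b) = phi ι x hspan z a * phi ι x hspan z b := by
  obtain ⟨l, g, hg⟩ := hspan a
  have hab : a * b = ∑ i ∈ Finset.range l, ι (g i) * (x ^ i * b) := by
    rw [hg, Finset.sum_mul]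
    exact Finset.sum_congr rfl fun i _ => by rw [mul_assoc]
  have hsum : ∀ (s : Finset ℕ) (f : ℕ → E),
      phi ι x hspan z (∑ i ∈ s, f i) = ∑ i ∈ s, phi ι x hspan z (f i) := by
    intro s f
    induction s using Finset.cons_induction with
    | empty => simpa using phi_zero ι x hspan hind z
    | cons i s hi ih =>
        rw [Finset.sum_cons, phi_add ι x hspan hind, ih, Finset.sum_cons]
  rw [hab, hsum, phi_rep ι x hspan hind z hg, Finset.sum_mul]
  refine Finset.sum_congr rfl fun i _ => ?_
  rw [phi_iota_mul ι x hspan hind, phi_pow_mul δ ι x hrel hspan hind z hz,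
    mul_assoc]

include hrel hind in
/-- The substitution algebra homomorphism for `z = x + ι c`. -/
noncomputable def phiHom (c : R) : E →ₐ[k] E :=
  have hz : ∀ f, (x + ι c) * ι f = ι f * (x + ι c) + ι (δ f) := fun f => by
    rw [add_mul, mul_add, hrel, ← map_mul, ← map_mul, mul_comm c f,
      add_right_comm]
  { toFun := phi ι x hspan (x + ι c)
    map_one' := by
      have h1 : (1 : E) = ι 1 := (map_one ι).symm
      rw [h1, phi_iota ι x hspan hind, map_one]
    map_mul' := phi_mul δ ι x hrel hspan hind _ hz
    map_zero' := phi_zero ι x hspan hind _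
    map_add' := phi_add ι x hspan hind _
    commutes' := fun a => by
      show phi ι x hspan (x + ι c) (algebraMap k E a) = algebraMap k E a
      rw [← ι.commutes a, phi_iota ι x hspan hind] }

include hspan in
lemma ore_algHom_ext {ψ ψ' : E →ₐ[k] E} (hι : ∀ f, ψ (ι f) = ψ' (ι f))
    (hx : ψ x = ψ' x) : ψ = ψ' := by
  ext e
  obtain ⟨l, g, hg⟩ := hspan e
  rw [hg, map_sum, map_sum]
  exact Finset.sum_congr rfl fun i _ => by rw [map_mul, map_pow, hι, hx, map_mul, map_pow]

end Aux

/-- For the differential Ore extension `E = R[x; δ]` over `R = k[z_1,…,z_n]`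
(char k = 0), the assignment `ν|_R = id`, `ν(x) = x + ∇·X_δ` (divergence of the vector
field of `δ`) defines a k-algebra automorphism of `E`. -/
theorem nakayama_differential_well_defined
    (k : Type*) [Field k] [CharZero k] (n : ℕ)
    (d : Fin n → MvPolynomial (Fin n) k)
    (δ : Derivation k (MvPolynomial (Fin n) k) (MvPolynomial (Fin n) k))
    (hδ : ∀ p : Fin n, δ (X p) = d p)
    (E : Type*) [Ring E] [Algebra k E]
    (ι : MvPolynomial (Fin n) k →ₐ[k] E) (x : E)
    (hrel : ∀ f, x * ι f = ι f * x + ι (δ f))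
    (hspan : ∀ e : E, ∃ (l : ℕ) (g : ℕ → MvPolynomial (Fin n) k),
      e = ∑ i ∈ Finset.range l, ι (g i) * x ^ i)
    (hind : ∀ (l : ℕ) (g : ℕ → MvPolynomial (Fin n) k),
      (∑ i ∈ Finset.range l, ι (g i) * x ^ i) = 0 → ∀ i < l, g i = 0) :
    ∃ ν : E ≃ₐ[k] E, (∀ f, ν (ι f) = ι f) ∧
      ν x = x + ι (∑ p : Fin n, pderiv p (d p)) := by
  set c : MvPolynomial (Fin n) k := ∑ p : Fin n, pderiv p (d p) with hc
  set Φ : E →ₐ[k] E := phiHom δ ι x hrel hspan hind c with hΦ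
  set Φ' : E →ₐ[k] E := phiHom δ ι x hrel hspan hind (-c) with hΦ'
  have hΦι : ∀ f, Φ (ι f) = ι f := fun f => phi_iota ι x hspan hind _ f
  have hΦ'ι : ∀ f, Φ' (ι f) = ι f := fun f => phi_iota ι x hspan hind _ f
  have hΦx : Φ x = x + ι c := phi_x ι x hspan hind _
  have hΦ'x : Φ' x = x + ι (-c) := phi_x ι x hspan hind _
  have hcomp1 : Φ.comp Φ' = AlgHom.id k E := by
    apply ore_algHom_ext ι x hspan
    · intro f; simp [AlgHom.comp_apply, hΦ'ι, hΦι]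
    · simp [AlgHom.comp_apply, hΦ'x, map_add, hΦx, hΦι, map_neg]
  have hcomp2 : Φ'.comp Φ = AlgHom.id k E := by
    apply ore_algHom_ext ι x hspan
    · intro f; simp [AlgHom.comp_apply, hΦι, hΦ'ι]
    · simp [AlgHom.comp_apply, hΦx, map_add, hΦ'x, hΦ'ι, map_neg]
  exact ⟨AlgEquiv.ofAlgHom Φ Φ' hcomp1 hcomp2, hΦι, hΦx⟩
end
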